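/- For all formulas A and B, the inversion rules (from Γ, A→B ⇒ Δ infer Γ, B ⇒ Δ), (from Γ, A→B ⇒ Δ infer Γ ⇒ A, Δ), (from Γ ⇒ A→B, Δ infer Γ, A ⇒ B, Δ), (from Γ ⇒ ⊥, Δ infer Γ ⇒ Δ), and (from Γ ⇒ □A, Δ infer Γ ⇒ A, Δ) are strongly admissible in Grz∞+cut. -/

import Mathlib

/-- Modal formulas of the Grzegorczyk logic: ⊥, atoms, →, □. -/
inductive Formula : Type
  | bot : Formula
  | atom : ℕ → Formula
  | imp : Formula → Formula → Formula
  | box : Formula → Formula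
deriving DecidableEq

/-- A sequent Γ ⇒ Δ is a pair of finite multisets of formulas. -/
abbrev Sequent : Type := Multiset Formula × Multiset Formula

/-- Names of the inference rules of Grz∞ + cut (including the two kinds of initial sequents). -/
inductive Rule : Type
  | ax | axBot | impL | impR | refl | box | cut
deriving DecidableEq

/-- □Π for a multiset Π. -/
def boxed (P : Multiset Formula) : Multiset Formula := P.map Formula.box

/-- `Inst r s p₁ p₂` : the rule `r` has a (correct) instance with conclusion `s`,
first premise `p₁` and second premise `p₂` (`none` = no such premise). -/
inductive Inst : Rule → Sequent → Option Sequent → Option Sequent → Prop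
  | ax (Γ Δ : Multiset Formula) (p : ℕ) :
      Inst .ax (Formula.atom p ::ₘ Γ, Formula.atom p ::ₘ Δ) none none
  | axBot (Γ Δ : Multiset Formula) :
      Inst .axBot (Formula.bot ::ₘ Γ, Δ) none none
  | impL (Γ Δ : Multiset Formula) (A B : Formula) :
      Inst .impL (Formula.imp A B ::ₘ Γ, Δ) (some (B ::ₘ Γ, Δ)) (some (Γ, A ::ₘ Δ))
  | impR (Γ Δ : Multiset Formula) (A B : Formula) :
      Inst .impR (Γ, Formula.imp A B ::ₘ Δ) (some (A ::ₘ Γ, B ::ₘ Δ)) none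
  | refl (Γ Δ : Multiset Formula) (A : Formula) :
      Inst .refl (Formula.box A ::ₘ Γ, Δ) (some (A ::ₘ Formula.box A ::ₘ Γ, Δ)) none
  | box (Γ Δ : Multiset Formula) (A : Formula) (P : Multiset Formula) :
      Inst .box (Γ + boxed P, Formula.box A ::ₘ Δ) (some (Γ + boxed P, A ::ₘ Δ))
        (some (boxed P, {A}))
  | cut (Γ Δ : Multiset Formula) (A : Formula) :
      Inst .cut (Γ, Δ) (some (Γ, A ::ₘ Δ)) (some (A ::ₘ Γ, Δ))

/-- A labelling of tree addresses (lists of booleans; `true` = second/right child)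
by a rule name together with a sequent; `none` means the address is outside the tree. -/
abbrev Lab : Type := List Bool → Option (Rule × Sequent)

/-- The labelling of the subtree at child `i`. -/
def shift (i : Bool) (l : Lab) : Lab := fun a => l (i :: a)

/-- An ∞-proof in Grz∞ + cut: a possibly infinite tree of sequents built according to
the rules, in which every infinite branch passes through the right premise of the
rule (□) infinitely many times. -/
structure InfProof : Type where
  lab : Lab
  root_some : (lab []).isSome
  nojunk : ∀ (a : List Bool) (i : Bool), lab a = none → lab (a ++ [i]) = none
  step : ∀ (a : List Bool) (r : Rule) (s : Sequent), lab a = some (r, s) →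
      Inst r s ((lab (a ++ [false])).map Prod.snd) ((lab (a ++ [true])).map Prod.snd)
  branch : ∀ f : ℕ → Bool, (∀ n : ℕ, (lab ((List.range n).map f)).isSome) →
      ∀ N : ℕ, ∃ n : ℕ, N ≤ n ∧ f n = true ∧
        (lab ((List.range n).map f)).map Prod.fst = some Rule.box

/-- The sequent at the root of an ∞-proof. -/
def rootSeq (π : InfProof) : Sequent := ((π.lab []).map Prod.snd).getD (0, 0)

/-- `Proves π S` : the ∞-proof `π` is an ∞-proof of the sequent `S`. -/
def Proves (π : InfProof) (S : Sequent) : Prop := ∃ r : Rule, π.lab [] = some (r, S)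

/-- An ∞-proof contains no application of the cut rule (i.e. it is a proof of Grz∞). -/
def NoCut (π : InfProof) : Prop := ∀ (a : List Bool) (r : Rule) (s : Sequent),
  π.lab a = some (r, s) → r ≠ Rule.cut

/-- Membership of an address in the main fragment: no proper passage through a
right premise of (□) strictly below it. -/
def InMain (l : Lab) (a : List Bool) : Prop :=
  (l a).isSome ∧ ∀ (b c : List Bool), a = b ++ true :: c →
    (l b).map Prod.fst = some Rule.box → c = []

/-- The local height |π| : the length of the longest branch in the main fragment. -/
noncomputable def height (l : Lab) : ℕ := sSup {n : ℕ | ∃ a : List Bool, InMain l a ∧ a.length = n}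

/-- The relations ∼ₙ on ∞-proofs (presented on labellings), defined inductively:
π ∼₀ τ always; a single-node proof is ∼ₙ-related to itself; proofs ending in the same
instance of (→L), (cut), (→R), (refl) are ∼ₙ-related when their immediate subproofs are;
proofs ending in the same instance of (□) are ∼ₙ₊₁-related when the left-premise subproofs
are ∼ₙ₊₁-related and the right-premise subproofs are ∼ₙ-related. -/
inductive Sim : ℕ → Lab → Lab → Prop
  | zero (l m : Lab) : Sim 0 l m
  | leaf (n : ℕ) (l : Lab) : height l = 0 → Sim n l l
  | bin (n : ℕ) (l m : Lab) (r : Rule) (s : Sequent) :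
      (r = Rule.impL ∨ r = Rule.cut) →
      l [] = some (r, s) → m [] = some (r, s) →
      (l [false]).map Prod.snd = (m [false]).map Prod.snd →
      (l [true]).map Prod.snd = (m [true]).map Prod.snd →
      Sim n (shift false l) (shift false m) → Sim n (shift true l) (shift true m) →
      Sim n l m
  | un (n : ℕ) (l m : Lab) (r : Rule) (s : Sequent) :
      (r = Rule.impR ∨ r = Rule.refl) →
      l [] = some (r, s) → m [] = some (r, s) →
      (l [false]).map Prod.snd = (m [false]).map Prod.snd →
      Sim n (shift false l) (shift false m) →
      Sim n l m
  | box (n : ℕ) (l m : Lab) (s : Sequent) :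
      l [] = some (Rule.box, s) → m [] = some (Rule.box, s) →
      (l [false]).map Prod.snd = (m [false]).map Prod.snd →
      (l [true]).map Prod.snd = (m [true]).map Prod.snd →
      Sim (n + 1) (shift false l) (shift false m) → Sim n (shift true l) (shift true m) →
      Sim (n + 1) l m

/-- The sets 𝒫ₙ of ∞-proofs (presented on labellings), defined inductively:
𝒫₀ is everything; single-node proofs are in every 𝒫ₙ; (→L), (→R), (refl) preserve
membership in 𝒫ₙ; a proof ending in (□) with left-premise subproof in 𝒫ₙ₊₁ and
right-premise subproof in 𝒫ₙ is in 𝒫ₙ₊₁. -/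
inductive MemP : ℕ → Lab → Prop
  | zero (l : Lab) : MemP 0 l
  | leaf (n : ℕ) (l : Lab) : height l = 0 → MemP n l
  | bin (n : ℕ) (l : Lab) (s : Sequent) :
      l [] = some (Rule.impL, s) →
      MemP n (shift false l) → MemP n (shift true l) → MemP n l
  | un (n : ℕ) (l : Lab) (r : Rule) (s : Sequent) :
      (r = Rule.impR ∨ r = Rule.refl) →
      l [] = some (r, s) → MemP n (shift false l) → MemP n l
  | box (n : ℕ) (l : Lab) (s : Sequent) :
      l [] = some (Rule.box, s) →
      MemP (n + 1) (shift false l) → MemP n (shift true l) → MemP (n + 1) l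

/- The metric d(π,τ) = 2^(−sup{n : π ∼ₙ τ}), with 2^(−∞) = 0. -/
open Classical in
noncomputable def pdist (π τ : InfProof) : ℝ :=
  if ∀ n : ℕ, Sim n π.lab τ.lab then 0
  else (2 : ℝ) ^ (-((sSup {n : ℕ | Sim n π.lab τ.lab} : ℕ) : ℤ))

/-- A mapping on ∞-proofs is nonexpansive if it preserves all relations ∼ₙ. -/
def Nonexpansive (f : InfProof → InfProof) : Prop :=
  ∀ (n : ℕ) (π τ : InfProof), Sim n π.lab τ.lab → Sim n (f π).lab (f τ).lab

/-- A mapping is adequate if it is nonexpansive, maps 𝒫₁ into 𝒫₁,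
and does not increase local height. -/
def Adequate (f : InfProof → InfProof) : Prop :=
  Nonexpansive f ∧ (∀ π : InfProof, MemP 1 π.lab → MemP 1 (f π).lab) ∧
    ∀ π : InfProof, height (f π).lab ≤ height π.lab

/-- The set 𝒫₁ of ∞-proofs whose main fragment is cut-free, as a subtype. -/
abbrev P1 : Type := {π : InfProof // MemP 1 π.lab}

/-- An A-reducing mapping: a nonexpansive map ℛ : 𝒫₁ × 𝒫₁ → 𝒫₁ such that
ℛ(π′,π″) proves Γ ⇒ Δ whenever π′ proves Γ ⇒ Δ, A and π″ proves A, Γ ⇒ Δ. -/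
def Reducing (A : Formula) (R : P1 → P1 → P1) : Prop :=
  (∀ (n : ℕ) (p₁ p₂ q₁ q₂ : P1), Sim n p₁.1.lab q₁.1.lab → Sim n p₂.1.lab q₂.1.lab →
      Sim n (R p₁ p₂).1.lab (R q₁ q₂).1.lab) ∧
  ∀ (p₁ p₂ : P1) (Γ Δ : Multiset Formula),
    Proves p₁.1 (Γ, A ::ₘ Δ) → Proves p₂.1 (A ::ₘ Γ, Δ) → Proves (R p₁ p₂).1 (Γ, Δ)

/-- A mapping is root-preserving if it maps ∞-proofs to ∞-proofs of the same sequent. -/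
def RootPres (f : InfProof → InfProof) : Prop :=
  ∀ (π : InfProof) (S : Sequent), Proves π S → Proves (f π) S

/-- The uniform distance on mappings of ∞-proofs. -/
noncomputable def udist (U V : InfProof → InfProof) : ℝ :=
  ⨆ π : InfProof, pdist (U π) (V π)

/- The immediate subproof of `π` at child `i` (junk value `π` if there is none). -/
open Classical in
noncomputable def subtree (π : InfProof) (i : Bool) : InfProof :=
  if h : ∃ τ : InfProof, τ.lab = shift i π.lab then h.choose else π

/-- `IsFOp E F` : `F` is the operator ℱ (relative to the one-step cut-elimination map
`E` = ℰ*) defined by: on proofs with cut-free main fragment it commutes with the last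
rule, applying `U` at right premises of (□) and fixing single-node proofs; on other
proofs it first applies `E`. -/
def IsFOp (E : InfProof → InfProof) (F : (InfProof → InfProof) → InfProof → InfProof) : Prop :=
  ∀ (U : InfProof → InfProof) (π : InfProof),
    (MemP 1 π.lab → height π.lab = 0 → F U π = π) ∧
    (∀ (r : Rule) (s : Sequent), MemP 1 π.lab → π.lab [] = some (r, s) →
        r ≠ Rule.box → r ≠ Rule.cut → height π.lab ≠ 0 →
        (F U π).lab [] = some (r, s) ∧
        shift false (F U π).lab = (F U (subtree π false)).lab ∧
        (r = Rule.impL → shift true (F U π).lab = (F U (subtree π true)).lab)) ∧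
    (∀ s : Sequent, MemP 1 π.lab → π.lab [] = some (Rule.box, s) →
        (F U π).lab [] = some (Rule.box, s) ∧
        shift false (F U π).lab = (F U (subtree π false)).lab ∧
        shift true (F U π).lab = (U (subtree π true)).lab) ∧
    (¬ MemP 1 π.lab → F U π = F U (E π))

/-- Membership in 𝒩ₙ : a root-preserving nonexpansive map whose image lies in 𝒫ₙ. -/
def InN (n : ℕ) (U : InfProof → InfProof) : Prop :=
  Nonexpansive U ∧ RootPres U ∧ ∀ π : InfProof, MemP n (U π).lab

/-- The finitary sequent calculus Grz_Seq (with cut allowed iff the flag is `true`). -/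
inductive GrzSeq : Bool → Sequent → Prop
  | ax (c : Bool) (Γ Δ : Multiset Formula) (A : Formula) :
      GrzSeq c (A ::ₘ Γ, A ::ₘ Δ)
  | bot (c : Bool) (Γ Δ : Multiset Formula) :
      GrzSeq c (Formula.bot ::ₘ Γ, Δ)
  | impL (c : Bool) (Γ Δ : Multiset Formula) (A B : Formula) :
      GrzSeq c (B ::ₘ Γ, Δ) → GrzSeq c (Γ, A ::ₘ Δ) →
      GrzSeq c (Formula.imp A B ::ₘ Γ, Δ)
  | impR (c : Bool) (Γ Δ : Multiset Formula) (A B : Formula) :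
      GrzSeq c (A ::ₘ Γ, B ::ₘ Δ) → GrzSeq c (Γ, Formula.imp A B ::ₘ Δ)
  | refl (c : Bool) (Γ Δ : Multiset Formula) (B : Formula) :
      GrzSeq c (B ::ₘ Formula.box B ::ₘ Γ, Δ) → GrzSeq c (Formula.box B ::ₘ Γ, Δ)
  | grz (c : Bool) (Γ Δ : Multiset Formula) (A : Formula) (P : Multiset Formula) :
      GrzSeq c (Formula.box (Formula.imp A (Formula.box A)) ::ₘ boxed P, {A}) →
      GrzSeq c (Γ + boxed P, Formula.box A ::ₘ Δ)
  | cut (Γ Δ : Multiset Formula) (A : Formula) :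
      GrzSeq true (Γ, A ::ₘ Δ) → GrzSeq true (A ::ₘ Γ, Δ) → GrzSeq true (Γ, Δ)

/-!
Each inversion relabels the main fragment of a proof: following the occurrence of the inverted
formula `C` upwards, it is replaced in every sequent by what the corresponding premise of its rule
adds to the context, and where `C` is principal the proof is cut down to that premise, which
already ends in the inverted sequent. The right premises of (□) do not contain the context and are
kept unchanged. Such a relabelling commutes with every rule and only removes nodes, so it preserves
each `∼ₙ` and each `𝒫ₙ` and does not lengthen branches of the main fragment. A branch of the new
tree either eventually runs inside an untouched subtree of the old one, or follows an old branch
that never passes a right premise of (□), which the branch condition of the old tree excludes.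
-/

def pathPrefix (f : ℕ → Bool) (n : ℕ) : List Bool := (List.range n).map f

@[simp] lemma pathPrefix_zero (f : ℕ → Bool) : pathPrefix f 0 = [] := rfl

lemma pathPrefix_succ (f : ℕ → Bool) (n : ℕ) :
    pathPrefix f (n + 1) = pathPrefix f n ++ [f n] := by
  simp [pathPrefix, List.range_succ]

lemma pathPrefix_add (f : ℕ → Bool) (m n : ℕ) :
    pathPrefix f (m + n) = pathPrefix f m ++ pathPrefix (fun k => f (m + k)) n := by
  induction n with
  | zero => simp
  | succ n ih => rw [← add_assoc, pathPrefix_succ, ih, pathPrefix_succ, List.append_assoc]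

lemma pathPrefix_cons (i : Bool) (f : ℕ → Bool) (n : ℕ) :
    pathPrefix (fun k => Nat.casesOn k i f) (n + 1) = i :: pathPrefix f n := by
  induction n with
  | zero => rfl
  | succ n ih => rw [pathPrefix_succ, ih, pathPrefix_succ]; rfl

def shiftBy (b : List Bool) (l : Lab) : Lab := fun x => l (b ++ x)

@[simp] lemma shiftBy_nil (l : Lab) : shiftBy [] l = l := rfl

lemma shiftBy_cons (i : Bool) (b : List Bool) (l : Lab) :
    shiftBy (i :: b) l = shiftBy b (shift i l) := rfl

lemma shiftBy_singleton (i : Bool) (l : Lab) : shiftBy [i] l = shift i l := rfl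

lemma shiftBy_append (b c : List Bool) (l : Lab) :
    shiftBy (b ++ c) l = shiftBy c (shiftBy b l) := by
  funext x; simp [shiftBy]

def LocallyValid (l : Lab) : Prop :=
  (l [] = none → ∀ i, l [i] = none) ∧
  ∀ r s, l [] = some (r, s) → Inst r s ((l [false]).map Prod.snd) ((l [true]).map Prod.snd)

/-- A labelling satisfying the conditions of `InfProof` except that its root may be empty. -/
structure ValidLab (l : Lab) : Prop where
  valid_at : ∀ a, LocallyValid (shiftBy a l)
  branch : ∀ f : ℕ → Bool, (∀ n, (l (pathPrefix f n)).isSome) →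
      ∀ N, ∃ n, N ≤ n ∧ f n = true ∧ (l (pathPrefix f n)).map Prod.fst = some Rule.box

lemma InfProof.validLab (π : InfProof) : ValidLab π.lab where
  valid_at a := ⟨fun h i => π.nojunk a i (by simpa [shiftBy] using h),
    fun r s h => π.step a r s (by simpa [shiftBy] using h)⟩
  branch := π.branch

def InfProof.ofValidLab (l : Lab) (hroot : (l []).isSome) (hv : ValidLab l) : InfProof where
  lab := l
  root_some := hroot
  nojunk a i h := (hv.valid_at a).1 (by simpa [shiftBy] using h) i
  step a r s h := (hv.valid_at a).2 r s (by simpa [shiftBy] using h)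
  branch := hv.branch

lemma ValidLab.child_eq_none {l : Lab} (hv : ValidLab l) (h : l [] = none) (i : Bool) :
    l [i] = none :=
  (hv.valid_at []).1 h i

lemma ValidLab.inst_root {l : Lab} (hv : ValidLab l) {r : Rule} {s : Sequent}
    (h : l [] = some (r, s)) :
    Inst r s ((l [false]).map Prod.snd) ((l [true]).map Prod.snd) :=
  (hv.valid_at []).2 r s h

lemma ValidLab.isSome_of_isSome_append {l : Lab} (hv : ValidLab l) {a b : List Bool}
    (h : (l (a ++ b)).isSome) : (l a).isSome := by
  induction b generalizing a with
  | nil => simpa using h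
  | cons j b ih =>
    have hj := ih (a := a ++ [j]) (by simpa using h)
    by_contra ha
    have hnone : l (a ++ [j]) = none := (hv.valid_at a).1 (by simpa [shiftBy] using ha) j
    simp [hnone] at hj

lemma validLab_shift {l : Lab} (hv : ValidLab l) (i : Bool) : ValidLab (shift i l) where
  valid_at a := hv.valid_at (i :: a)
  branch f hf N := by
    have hpath : ∀ n, (l (pathPrefix (fun k => Nat.casesOn k i f) n)).isSome
      | 0 => by
        by_contra h
        have h0 : (l [i]).isSome := hf 0
        simp [hv.child_eq_none (by simpa using h) i] at h0
      | n + 1 => by rw [pathPrefix_cons]; exact hf n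
    obtain ⟨_ | n, hn, hfn, hbox⟩ := hv.branch _ hpath (N + 1)
    · omega
    · refine ⟨n, by omega, hfn, ?_⟩
      rwa [pathPrefix_cons] at hbox

lemma validLab_shiftBy {l : Lab} (hv : ValidLab l) (b : List Bool) :
    ValidLab (shiftBy b l) := by
  induction b generalizing l with
  | nil => exact hv
  | cons i b ih => exact ih (validLab_shift hv i)

lemma ValidLab.branch_of_tail {m : Lab} {f : ℕ → Bool} {n₀ : ℕ}
    (hv : ValidLab (shiftBy (pathPrefix f n₀) m))
    (hf : ∀ n, (m (pathPrefix f n)).isSome) (N : ℕ) :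
    ∃ n, N ≤ n ∧ f n = true ∧ (m (pathPrefix f n)).map Prod.fst = some Rule.box := by
  obtain ⟨k, hk, hfk, hbox⟩ := hv.branch (fun k => f (n₀ + k))
    (fun k => by simpa [shiftBy, ← pathPrefix_add] using hf (n₀ + k)) N
  exact ⟨n₀ + k, by omega, hfk, by simpa [shiftBy, ← pathPrefix_add] using hbox⟩

lemma inMain_cons_iff {l : Lab} {i : Bool} {a : List Bool} :
    InMain l (i :: a) ↔
      InMain (shift i l) a ∧ ((l []).map Prod.fst = some Rule.box → i = true → a = []) := by
  constructor
  · intro h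
    exact ⟨⟨h.1, fun b c hbc hb => h.2 (i :: b) c (by simp [hbc]) hb⟩,
      fun hb hi => h.2 [] a (by simp [hi]) hb⟩
  · rintro ⟨h, hroot⟩
    refine ⟨h.1, fun b c hbc hb => ?_⟩
    cases b with
    | nil =>
      obtain ⟨rfl, rfl⟩ := List.cons_eq_cons.1 hbc
      exact hroot hb rfl
    | cons j b =>
      simp only [List.cons_append, List.cons.injEq] at hbc
      obtain ⟨rfl, hbc⟩ := hbc
      exact h.2 b c hbc hb

lemma InMain.of_append {l : Lab} (hv : ValidLab l) {a b : List Bool} (h : InMain l (a ++ b)) :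
    InMain l a :=
  ⟨hv.isSome_of_isSome_append h.1, fun u c hac hu =>
    (List.append_eq_nil_iff.1 (h.2 u (c ++ b) (by simp [hac]) hu)).1⟩

open Classical in
/-- Kőnig's lemma for prefix-closed sets of binary addresses. -/
theorem exists_path_of_unbounded {S : Set (List Bool)} (hS : ∀ a b, a ++ b ∈ S → a ∈ S)
    (hunb : ∀ N, ∃ a ∈ S, N ≤ a.length) :
    ∃ f : ℕ → Bool, ∀ n, pathPrefix f n ∈ S := by
  let Big (b : List Bool) : Prop := ∀ N, ∃ c, b ++ c ∈ S ∧ N ≤ c.length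
  let next (b : List Bool) : Bool := if Big (b ++ [false]) then false else true
  have hnext : ∀ b, Big b → Big (b ++ [next b]) := by
    intro b hb
    by_cases h0 : Big (b ++ [false])
    · simp [next, h0]
    simp only [next, h0, if_false]
    intro N
    obtain ⟨N₀, hN₀⟩ : ∃ N₀, ∀ c, b ++ [false] ++ c ∈ S → c.length < N₀ := by
      simpa [Big] using h0
    obtain ⟨_ | ⟨i, c⟩, hc, hlen⟩ := hb (max N N₀ + 1)
    · simp at hlen
    cases i
    all_goals rw [List.length_cons] at hlen
    · exact absurd (hN₀ c (by simpa using hc)) (by omega)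
    · exact ⟨c, by simpa using hc, by omega⟩
  let p (n : ℕ) : List Bool := (fun b => b ++ [next b])^[n] []
  have hp_succ (n : ℕ) : p (n + 1) = p n ++ [next (p n)] :=
    Function.iterate_succ_apply' (fun b => b ++ [next b]) n []
  have hp : ∀ n, pathPrefix (fun n => next (p n)) n = p n := by
    intro n
    induction n with
    | zero => rfl
    | succ n ih => rw [pathPrefix_succ, ih, hp_succ]
  have hbig : ∀ n, Big (p n) := by
    intro n
    induction n with
    | zero => simpa [p, Big] using hunb
    | succ n ih => exact hp_succ n ▸ hnext _ ih
  refine ⟨fun n => next (p n), fun n => ?_⟩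
  obtain ⟨c, hc, -⟩ := hbig n 0
  exact hp n ▸ hS _ _ hc

lemma ValidLab.bddAbove_main {l : Lab} (hv : ValidLab l) :
    BddAbove {n : ℕ | ∃ a : List Bool, InMain l a ∧ a.length = n} := by
  by_contra h
  rw [not_bddAbove_iff] at h
  obtain ⟨f, hf⟩ := exists_path_of_unbounded (S := {a | InMain l a})
    (fun a b h => InMain.of_append hv h)
    (fun N => let ⟨_, ⟨a, ha, hlen⟩, hN⟩ := h N; ⟨a, ha, by omega⟩)
  obtain ⟨n, -, hfn, hbox⟩ := hv.branch f (fun n => (hf n).1) 0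
  have := (hf (n + 2)).2 (pathPrefix f n) [f (n + 1)]
    (by simp [pathPrefix_succ, hfn]) hbox
  simp at this

section Transform

variable (ρ : Sequent → Sequent) (R₀ : Option Rule) (g : Bool)

/-- At a grafting node the inverted formula is principal, and the `g`-th premise already ends in
the inverted sequent. -/
def Grafts (l : Lab) : Prop :=
  ∃ r s, l [] = some (r, s) ∧ some r = R₀ ∧ (l [g]).map Prod.snd = some (ρ s)

open Classical in
noncomputable def invertLab : Lab → Lab
  | l, [] => if Grafts ρ R₀ g l then l [g] else (l []).map (Prod.map id ρ)
  | l, i :: a =>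
    if Grafts ρ R₀ g l then l (g :: i :: a)
    else if (l []).map Prod.fst = some Rule.box ∧ i = true then l (i :: a)
    else invertLab (shift i l) a

def Compatible (Φ : Sequent → Prop) : Prop :=
  ∀ r s p₁ p₂, Inst r s p₁ p₂ → Φ s →
    ¬(some r = R₀ ∧ cond g p₂ p₁ = some (ρ s)) →
    Inst r (ρ s) (p₁.map ρ) (if r = Rule.box then p₂ else p₂.map ρ) ∧
    (∀ t ∈ p₁, Φ t) ∧ (r ≠ Rule.box → ∀ t ∈ p₂, Φ t)

variable {ρ R₀ g} {l : Lab}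

lemma invertLab_of_grafts (h : Grafts ρ R₀ g l) : invertLab ρ R₀ g l = shift g l := by
  funext a
  cases a <;> simp [invertLab, h, shift]

lemma invertLab_nil (h : ¬Grafts ρ R₀ g l) :
    invertLab ρ R₀ g l [] = (l []).map (Prod.map id ρ) := by
  simp [invertLab, h]

lemma shift_invertLab_of_box (h : ¬Grafts ρ R₀ g l) (hb : (l []).map Prod.fst = some Rule.box) :
    shift true (invertLab ρ R₀ g l) = shift true l := by
  funext a
  simp [invertLab, h, hb, shift]

lemma invertLab_right_of_box (h : ¬Grafts ρ R₀ g l)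
    (hb : (l []).map Prod.fst = some Rule.box) : invertLab ρ R₀ g l [true] = l [true] :=
  congrFun (shift_invertLab_of_box h hb) []

lemma shift_invertLab {i : Bool} (h : ¬Grafts ρ R₀ g l)
    (hi : ¬((l []).map Prod.fst = some Rule.box ∧ i = true)) :
    shift i (invertLab ρ R₀ g l) = invertLab ρ R₀ g (shift i l) := by
  funext a
  simp only [shift, invertLab, if_neg h, if_neg hi]

lemma shift_invertLab_cases (l : Lab) (i : Bool) :
    (∃ b, shift i (invertLab ρ R₀ g l) = shiftBy b l) ∨
      (¬Grafts ρ R₀ g l ∧ ¬((l []).map Prod.fst = some Rule.box ∧ i = true) ∧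
        shift i (invertLab ρ R₀ g l) = invertLab ρ R₀ g (shift i l)) := by
  by_cases hG : Grafts ρ R₀ g l
  · exact .inl ⟨[g, i], by rw [invertLab_of_grafts hG]; rfl⟩
  by_cases hb : (l []).map Prod.fst = some Rule.box ∧ i = true
  · obtain ⟨hb, rfl⟩ := hb
    exact .inl ⟨[true], shift_invertLab_of_box hG hb⟩
  exact .inr ⟨hG, hb, shift_invertLab hG hb⟩

lemma map_snd_invertLab_nil (l : Lab) :
    (invertLab ρ R₀ g l []).map Prod.snd = ((l []).map Prod.snd).map ρ := by
  by_cases hG : Grafts ρ R₀ g l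
  · rw [invertLab_of_grafts hG]
    obtain ⟨r, s, hl, -, hs⟩ := hG
    simpa [shift, hl] using hs
  · rw [invertLab_nil hG]
    cases l [] <;> rfl

lemma isSome_invertLab_nil (l : Lab) : (invertLab ρ R₀ g l []).isSome = (l []).isSome := by
  simpa using congrArg Option.isSome (map_snd_invertLab_nil (ρ := ρ) (R₀ := R₀) (g := g) l)

lemma grafts_iff_of_root {r : Rule} {s : Sequent} (hl : l [] = some (r, s)) :
    Grafts ρ R₀ g l ↔ some r = R₀ ∧ (l [g]).map Prod.snd = some (ρ s) := by
  constructor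
  · rintro ⟨r', s', hl', h⟩
    rw [hl] at hl'
    cases hl'
    exact h
  · exact fun h => ⟨r, s, hl, h⟩

lemma not_grafts_iff_of_root {r : Rule} {s : Sequent} (hl : l [] = some (r, s)) :
    ¬Grafts ρ R₀ g l ↔ ¬(some r = R₀ ∧
      cond g ((l [true]).map Prod.snd) ((l [false]).map Prod.snd) = some (ρ s)) := by
  rw [grafts_iff_of_root hl]
  cases g <;> rfl

lemma invertLab_root_of_not_grafts {r : Rule} {s : Sequent}
    (hG : ¬Grafts ρ R₀ g l) (hl : l [] = some (r, s)) :
    invertLab ρ R₀ g l [] = some (r, ρ s) := by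
  simp [invertLab_nil hG, hl]

lemma map_snd_invertLab_child {i : Bool} (hG : ¬Grafts ρ R₀ g l)
    (hi : ¬((l []).map Prod.fst = some Rule.box ∧ i = true)) :
    (invertLab ρ R₀ g l [i]).map Prod.snd = ((l [i]).map Prod.snd).map ρ := by
  rw [show invertLab ρ R₀ g l [i] = shift i (invertLab ρ R₀ g l) [] from rfl,
    shift_invertLab hG hi, map_snd_invertLab_nil]
  rfl

lemma grafts_iff_of_sim {m : Lab} {r : Rule} {s : Sequent} (hl : l [] = some (r, s))
    (hm : m [] = some (r, s))
    (hchild : some r = R₀ → (l [g]).map Prod.snd = (m [g]).map Prod.snd) :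
    Grafts ρ R₀ g l ↔ Grafts ρ R₀ g m := by
  rw [grafts_iff_of_root hl, grafts_iff_of_root hm]
  exact and_congr_right fun hR => by rw [hchild hR]

section Compatible

variable {Φ : Sequent → Prop} (hc : Compatible ρ R₀ g Φ)
include hc

lemma locallyValid_invertLab (hv : ValidLab l) (hΦ : ∀ p ∈ l [], Φ p.2) :
    LocallyValid (invertLab ρ R₀ g l) := by
  by_cases hG : Grafts ρ R₀ g l
  · rw [invertLab_of_grafts hG]
    exact hv.valid_at [g]
  refine ⟨fun h i => ?_, fun r s h => ?_⟩
  · have hl : l [] = none := by simpa [invertLab_nil hG] using h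
    have hli : shift i l [] = none := hv.child_eq_none hl i
    show shift i (invertLab ρ R₀ g l) [] = none
    rw [shift_invertLab hG (by simp [hl]), invertLab_nil fun ⟨_, _, h, _⟩ => by simp [hli] at h]
    simp [hli]
  · rw [invertLab_nil hG] at h
    obtain ⟨⟨r, s₀⟩, hl, hrs⟩ := Option.map_eq_some_iff.1 h
    obtain ⟨rfl, rfl⟩ := Prod.ext_iff.1 hrs
    obtain ⟨hinst, -, -⟩ :=
      hc r s₀ _ _ (hv.inst_root hl) (hΦ _ hl) ((not_grafts_iff_of_root hl).1 hG)
    rw [map_snd_invertLab_child hG (by simp)]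
    by_cases hr : r = Rule.box
    · subst hr
      rw [invertLab_right_of_box hG (by simp [hl])]
      simpa using hinst
    · rw [map_snd_invertLab_child hG (by simp [hl, hr])]
      simpa [hr] using hinst

lemma forall_mem_shift_root (hv : ValidLab l) (hΦ : ∀ p ∈ l [], Φ p.2) {i : Bool}
    (hG : ¬Grafts ρ R₀ g l) (hi : ¬((l []).map Prod.fst = some Rule.box ∧ i = true)) :
    ∀ p ∈ shift i l [], Φ p.2 := by
  intro p hp
  cases hl : l [] with
  | none => simp [shift, hv.child_eq_none hl i] at hp
  | some q =>
    obtain ⟨r, s⟩ := q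
    obtain ⟨-, h₁, h₂⟩ :=
      hc r s _ _ (hv.inst_root hl) (hΦ _ hl) ((not_grafts_iff_of_root hl).1 hG)
    cases i
    · exact h₁ p.2 (by simp [show l [false] = some p from hp])
    · exact h₂ (by simpa [hl] using hi) p.2 (by simp [show l [true] = some p from hp])

lemma ValidLab.invertLab_valid_at (hv : ValidLab l) (hΦ : ∀ p ∈ l [], Φ p.2) (a : List Bool) :
    LocallyValid (shiftBy a (invertLab ρ R₀ g l)) := by
  induction a generalizing l with
  | nil => exact locallyValid_invertLab hc hv hΦ
  | cons i a ih =>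
    rw [shiftBy_cons]
    rcases shift_invertLab_cases l i with ⟨b, hb⟩ | ⟨hG, hi, h⟩
    · rw [hb, ← shiftBy_append]
      exact hv.valid_at (b ++ a)
    · rw [h]
      exact ih (validLab_shift hv i) (forall_mem_shift_root hc hv hΦ hG hi)

end Compatible

lemma ValidLab.invertLab_branch (hv : ValidLab l) (f : ℕ → Bool)
    (hf : ∀ n, (invertLab ρ R₀ g l (pathPrefix f n)).isSome) (N : ℕ) :
    ∃ n, N ≤ n ∧ f n = true ∧
      (invertLab ρ R₀ g l (pathPrefix f n)).map Prod.fst = some Rule.box := by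
  set T := fun n => shiftBy (pathPrefix f n) (invertLab ρ R₀ g l)
  set L := fun n => shiftBy (pathPrefix f n) l
  by_cases hjoin : ∃ n b, T n = shiftBy b l
  · obtain ⟨n₀, b, hb⟩ := hjoin
    exact ValidLab.branch_of_tail (hb ▸ validLab_shiftBy hv b) hf N
  -- otherwise the branch stays in the relabelled part, so it can never pass a right premise of (□)
  simp only [not_exists] at hjoin
  have hstep : ∀ n, T n = invertLab ρ R₀ g (L n) →
      ¬((L n []).map Prod.fst = some Rule.box ∧ f n = true) ∧
        T (n + 1) = invertLab ρ R₀ g (L (n + 1)) := by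
    intro n hn
    have hsucc : T (n + 1) = shift (f n) (invertLab ρ R₀ g (L n)) := by
      simp only [T, pathPrefix_succ, shiftBy_append, shiftBy_singleton]
      rw [← hn]
    rcases shift_invertLab_cases (L n) (f n) with ⟨b, hb⟩ | ⟨-, hi, h⟩
    · exact absurd (by rw [hsucc, hb, ← shiftBy_append]) (hjoin (n + 1) (pathPrefix f n ++ b))
    · refine ⟨hi, ?_⟩
      rw [hsucc, h]
      simp only [L, pathPrefix_succ, shiftBy_append, shiftBy_singleton]
  have heq : ∀ n, T n = invertLab ρ R₀ g (L n) := by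
    intro n
    induction n with
    | zero => rfl
    | succ n ih => exact (hstep n ih).2
  have hsome : ∀ n, (l (pathPrefix f n)).isSome := by
    intro n
    have h : (T n []).isSome := by simpa [T, shiftBy] using hf n
    simpa [heq n, L, shiftBy, isSome_invertLab_nil] using h
  obtain ⟨n, -, hfn, hbox⟩ := hv.branch f hsome 0
  exact absurd ⟨by simpa [L, shiftBy] using hbox, hfn⟩ (hstep n (heq n)).1

lemma validLab_invertLab {Φ : Sequent → Prop} (hc : Compatible ρ R₀ g Φ) (hv : ValidLab l)
    (hΦ : ∀ p ∈ l [], Φ p.2) : ValidLab (invertLab ρ R₀ g l) :=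
  ⟨hv.invertLab_valid_at hc hΦ, hv.invertLab_branch⟩

lemma sim_invertLab_of_bin {n : ℕ} {m : Lab} {r : Rule} {s : Sequent}
    (hr : r = Rule.impL ∨ r = Rule.cut) (hl : l [] = some (r, s)) (hm : m [] = some (r, s))
    (h₀ : (l [false]).map Prod.snd = (m [false]).map Prod.snd)
    (h₁ : (l [true]).map Prod.snd = (m [true]).map Prod.snd)
    (hs₀ : Sim n (shift false l) (shift false m)) (hs₁ : Sim n (shift true l) (shift true m))
    (ih₀ : Sim n (invertLab ρ R₀ g (shift false l)) (invertLab ρ R₀ g (shift false m)))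
    (ih₁ : Sim n (invertLab ρ R₀ g (shift true l)) (invertLab ρ R₀ g (shift true m))) :
    Sim n (invertLab ρ R₀ g l) (invertLab ρ R₀ g m) := by
  have hGiff := grafts_iff_of_sim (ρ := ρ) (R₀ := R₀) (g := g) hl hm fun _ => by
    cases g <;> assumption
  by_cases hG : Grafts ρ R₀ g l
  · rw [invertLab_of_grafts hG, invertLab_of_grafts (hGiff.1 hG)]
    cases g <;> assumption
  have hG' := hGiff.not.1 hG
  have hi : ∀ {k : Lab} i, k [] = some (r, s) →
      ¬((k []).map Prod.fst = some Rule.box ∧ i = true) := fun _ hk => by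
    rcases hr with rfl | rfl <;> simp [hk]
  refine .bin n _ _ r (ρ s) hr (invertLab_root_of_not_grafts hG hl)
    (invertLab_root_of_not_grafts hG' hm) ?_ ?_ ?_ ?_
  · rw [map_snd_invertLab_child hG (hi _ hl), map_snd_invertLab_child hG' (hi _ hm), h₀]
  · rw [map_snd_invertLab_child hG (hi _ hl), map_snd_invertLab_child hG' (hi _ hm), h₁]
  · rwa [shift_invertLab hG (hi _ hl), shift_invertLab hG' (hi _ hm)]
  · rwa [shift_invertLab hG (hi _ hl), shift_invertLab hG' (hi _ hm)]

section MainFragment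

variable (hg : g = true → R₀ = some Rule.impL)
include hg

lemma exists_inMain_of_inMain_invertLab (a : List Bool) (l : Lab)
    (h : InMain (invertLab ρ R₀ g l) a) : ∃ a', InMain l a' ∧ a.length ≤ a'.length := by
  induction a generalizing l with
  | nil => exact ⟨[], ⟨isSome_invertLab_nil l ▸ h.1, by simp⟩, le_rfl⟩
  | cons i a ih =>
    by_cases hG : Grafts ρ R₀ g l
    · rw [invertLab_of_grafts hG] at h
      obtain ⟨r, s, hl, hR, -⟩ := hG
      refine ⟨g :: i :: a, inMain_cons_iff.2 ⟨h, fun hb hgt => ?_⟩, by simp⟩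
      simp only [hl, Option.map_some, Option.some.injEq] at hb
      simp [hb, hg hgt] at hR
    obtain ⟨h, hroot⟩ := inMain_cons_iff.1 h
    have hfst : (invertLab ρ R₀ g l []).map Prod.fst = (l []).map Prod.fst := by
      rw [invertLab_nil hG]; cases l [] <;> rfl
    by_cases hb : (l []).map Prod.fst = some Rule.box ∧ i = true
    · obtain ⟨hb, rfl⟩ := hb
      obtain rfl := hroot (hfst ▸ hb) rfl
      rw [shift_invertLab_of_box hG hb] at h
      exact ⟨[true], inMain_cons_iff.2 ⟨h, fun _ _ => rfl⟩, le_rfl⟩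
    · rw [shift_invertLab hG hb] at h
      obtain ⟨a', hM, hlen⟩ := ih _ h
      refine ⟨i :: a', inMain_cons_iff.2 ⟨hM, fun h₁ h₂ => absurd ⟨h₁, h₂⟩ hb⟩, ?_⟩
      simpa using hlen

lemma height_invertLab_le {l : Lab} (hv : ValidLab l) :
    height (invertLab ρ R₀ g l) ≤ height l :=
  csSup_le' <| by
    rintro n ⟨a, hM, rfl⟩
    obtain ⟨a', hM', hlen⟩ := exists_inMain_of_inMain_invertLab hg a l hM
    exact hlen.trans (le_csSup hv.bddAbove_main ⟨a', hM', rfl⟩)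

lemma eq_false_of_root_ne_impL {r : Rule} (hr : r ≠ Rule.impL) (hR : some r = R₀) :
    g = false := by
  cases g
  · rfl
  · exact absurd (Option.some.inj (hR.trans (hg rfl))) hr

lemma sim_invertLab_of_un {n : ℕ} {l m : Lab} {r : Rule} {s : Sequent}
    (hr : r = Rule.impR ∨ r = Rule.refl) (hl : l [] = some (r, s)) (hm : m [] = some (r, s))
    (h₀ : (l [false]).map Prod.snd = (m [false]).map Prod.snd)
    (hs₀ : Sim n (shift false l) (shift false m))
    (ih₀ : Sim n (invertLab ρ R₀ g (shift false l)) (invertLab ρ R₀ g (shift false m))) :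
    Sim n (invertLab ρ R₀ g l) (invertLab ρ R₀ g m) := by
  have hgf := eq_false_of_root_ne_impL hg (r := r) (by rcases hr with rfl | rfl <;> simp)
  have hGiff := grafts_iff_of_sim (ρ := ρ) (g := g) hl hm fun hR => by rw [hgf hR]; exact h₀
  by_cases hG : Grafts ρ R₀ g l
  · obtain rfl := hgf ((grafts_iff_of_root hl).1 hG).1
    rwa [invertLab_of_grafts hG, invertLab_of_grafts (hGiff.1 hG)]
  have hG' := hGiff.not.1 hG
  refine .un n _ _ r (ρ s) hr (invertLab_root_of_not_grafts hG hl)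
    (invertLab_root_of_not_grafts hG' hm) ?_ ?_
  · rw [map_snd_invertLab_child hG (by simp), map_snd_invertLab_child hG' (by simp), h₀]
  · rwa [shift_invertLab hG (by simp), shift_invertLab hG' (by simp)]

lemma sim_invertLab_of_box {n : ℕ} {l m : Lab} {s : Sequent}
    (hl : l [] = some (Rule.box, s)) (hm : m [] = some (Rule.box, s))
    (h₀ : (l [false]).map Prod.snd = (m [false]).map Prod.snd)
    (h₁ : (l [true]).map Prod.snd = (m [true]).map Prod.snd)
    (hs₀ : Sim (n + 1) (shift false l) (shift false m))
    (hs₁ : Sim n (shift true l) (shift true m))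
    (ih₀ : Sim (n + 1) (invertLab ρ R₀ g (shift false l))
      (invertLab ρ R₀ g (shift false m))) :
    Sim (n + 1) (invertLab ρ R₀ g l) (invertLab ρ R₀ g m) := by
  have hgf := eq_false_of_root_ne_impL hg (r := Rule.box) (by simp)
  have hGiff := grafts_iff_of_sim (ρ := ρ) (g := g) hl hm fun hR => by rw [hgf hR]; exact h₀
  by_cases hG : Grafts ρ R₀ g l
  · obtain rfl := hgf ((grafts_iff_of_root hl).1 hG).1
    rwa [invertLab_of_grafts hG, invertLab_of_grafts (hGiff.1 hG)]
  have hG' := hGiff.not.1 hG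
  have hbl : (l []).map Prod.fst = some Rule.box := by simp [hl]
  have hbm : (m []).map Prod.fst = some Rule.box := by simp [hm]
  refine .box n _ _ (ρ s) (invertLab_root_of_not_grafts hG hl)
    (invertLab_root_of_not_grafts hG' hm) ?_ ?_ ?_ ?_
  · rw [map_snd_invertLab_child hG (by simp), map_snd_invertLab_child hG' (by simp), h₀]
  · rwa [invertLab_right_of_box hG hbl, invertLab_right_of_box hG' hbm]
  · rwa [shift_invertLab hG (by simp), shift_invertLab hG' (by simp)]
  · rwa [shift_invertLab_of_box hG hbl, shift_invertLab_of_box hG' hbm]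

lemma sim_invertLab {n : ℕ} {l m : Lab} (h : Sim n l m) (hvl : ValidLab l) (hvm : ValidLab m) :
    Sim n (invertLab ρ R₀ g l) (invertLab ρ R₀ g m) := by
  induction h with
  | zero => exact .zero _ _
  | leaf n l hl => exact .leaf n _ (Nat.le_zero.1 (hl ▸ height_invertLab_le hg hvl))
  | bin n l m r s hr hl hm h₀ h₁ hs₀ hs₁ ih₀ ih₁ =>
    exact sim_invertLab_of_bin hr hl hm h₀ h₁ hs₀ hs₁
      (ih₀ (validLab_shift hvl _) (validLab_shift hvm _))
      (ih₁ (validLab_shift hvl _) (validLab_shift hvm _))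
  | un n l m r s hr hl hm h₀ hs₀ ih₀ =>
    exact sim_invertLab_of_un hg hr hl hm h₀ hs₀
      (ih₀ (validLab_shift hvl _) (validLab_shift hvm _))
  | box n l m s hl hm h₀ h₁ hs₀ hs₁ ih₀ =>
    exact sim_invertLab_of_box hg hl hm h₀ h₁ hs₀ hs₁
      (ih₀ (validLab_shift hvl _) (validLab_shift hvm _))

lemma memP_invertLab {n : ℕ} {l : Lab} (h : MemP n l) (hv : ValidLab l) :
    MemP n (invertLab ρ R₀ g l) := by
  induction h with
  | zero => exact .zero _
  | leaf n l hl => exact .leaf n _ (Nat.le_zero.1 (hl ▸ height_invertLab_le hg hv))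
  | bin n l s hl _ _ ih₀ ih₁ =>
    by_cases hG : Grafts ρ R₀ g l
    · rw [invertLab_of_grafts hG]
      cases g <;> assumption
    refine .bin n _ (ρ s) (invertLab_root_of_not_grafts hG hl) ?_ ?_
    · rw [shift_invertLab hG (by simp)]
      exact ih₀ (validLab_shift hv _)
    · rw [shift_invertLab hG (by simp [hl])]
      exact ih₁ (validLab_shift hv _)
  | un n l r s hr hl _ ih₀ =>
    by_cases hG : Grafts ρ R₀ g l
    · obtain rfl := eq_false_of_root_ne_impL hg (r := r) (by rcases hr with rfl | rfl <;> simp)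
        ((grafts_iff_of_root hl).1 hG).1
      rw [invertLab_of_grafts hG]
      assumption
    refine .un n _ r (ρ s) hr (invertLab_root_of_not_grafts hG hl) ?_
    rw [shift_invertLab hG (by simp)]
    exact ih₀ (validLab_shift hv _)
  | box n l s hl _ _ ih₀ =>
    by_cases hG : Grafts ρ R₀ g l
    · obtain rfl := eq_false_of_root_ne_impL hg (r := Rule.box) (by simp)
        ((grafts_iff_of_root hl).1 hG).1
      rw [invertLab_of_grafts hG]
      assumption
    refine .box n _ (ρ s) (invertLab_root_of_not_grafts hG hl) ?_ ?_
    · rw [shift_invertLab hG (by simp)]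
      exact ih₀ (validLab_shift hv _)
    · rw [shift_invertLab_of_box hG (by simp [hl])]
      assumption

end MainFragment

lemma Sim.root_eq {n : ℕ} {l m : Lab} (h : Sim (n + 1) l m) : l [] = m [] := by
  cases h <;> simp_all

section Proofs

variable {Φ : Sequent → Prop}

open Classical in
noncomputable def invertProof (hc : Compatible ρ R₀ g Φ) (π : InfProof) : InfProof :=
  if h : ∀ p ∈ π.lab [], Φ p.2 then
    .ofValidLab (invertLab ρ R₀ g π.lab) (isSome_invertLab_nil π.lab ▸ π.root_some)
      (validLab_invertLab hc π.validLab h)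
  else π

open Classical in
lemma invertProof_lab (hc : Compatible ρ R₀ g Φ) (π : InfProof) :
    (invertProof hc π).lab =
      if ∀ p ∈ π.lab [], Φ p.2 then invertLab ρ R₀ g π.lab else π.lab := by
  unfold invertProof
  split_ifs <;> rfl

lemma adequate_invertProof (hc : Compatible ρ R₀ g Φ)
    (hg : g = true → R₀ = some Rule.impL) :
    Adequate (invertProof hc) := by
  refine ⟨fun n π τ h => ?_, fun π h => ?_, fun π => ?_⟩
  · cases n with
    | zero => exact .zero _ _
    | succ n =>
      rw [invertProof_lab, invertProof_lab, ← h.root_eq]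
      split_ifs
      · exact sim_invertLab hg h π.validLab τ.validLab
      · exact h
  · rw [invertProof_lab]
    split_ifs
    · exact memP_invertLab hg h π.validLab
    · exact h
  · rw [invertProof_lab]
    split_ifs
    · exact height_invertLab_le hg π.validLab
    · exact le_rfl

lemma proves_invertProof (hc : Compatible ρ R₀ g Φ) {π : InfProof} {S : Sequent}
    (h : Proves π S) (hS : Φ S) : Proves (invertProof hc π) (ρ S) := by
  obtain ⟨r, hr⟩ := h
  have hΦ : ∀ p ∈ π.lab [], Φ p.2 := by simp [hr, hS]
  have hsnd : (invertLab ρ R₀ g π.lab []).map Prod.snd = some (ρ S) := by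
    simp [map_snd_invertLab_nil, hr]
  obtain ⟨⟨r', S'⟩, h, rfl⟩ := Option.map_eq_some_iff.1 hsnd
  exact ⟨r', by rw [invertProof_lab, if_pos hΦ, h]⟩

end Proofs

end Transform

def weaken (L R : Multiset Formula) (s : Sequent) : Sequent := (L + s.1, R + s.2)

lemma mem_of_mem_add_boxed {C : Formula} {Γ P : Multiset Formula} (hC : ∀ A, C ≠ Formula.box A)
    (h : C ∈ Γ + boxed P) : C ∈ Γ := by
  simpa [boxed, Ne.symm (hC _)] using h

lemma compatible_impL (A B : Formula) {L R : Multiset Formula} {g : Bool}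
    (hprem : ∀ Γ Δ,
      cond g (some (Γ, A ::ₘ Δ)) (some (B ::ₘ Γ, Δ)) = some (weaken L R (Γ, Δ))) :
    Compatible (fun s => weaken L R (s.1.erase (A.imp B), s.2)) (some Rule.impL) g
      (fun s => A.imp B ∈ s.1) := by
  intro r s p₁ p₂ h hC hng
  cases h with
  | ax Γ Δ p =>
    have hΓ : A.imp B ∈ Γ := by simpa using hC
    simpa [weaken, Multiset.erase_cons_tail_of_mem hΓ] using Inst.ax (L + Γ.erase _) (R + Δ) p
  | axBot Γ Δ =>
    have hΓ : A.imp B ∈ Γ := by simpa using hC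
    simpa [weaken, Multiset.erase_cons_tail_of_mem hΓ] using Inst.axBot (L + Γ.erase _) (R + Δ)
  | impL Γ Δ A' B' =>
    have hΓ : A.imp B ∈ Γ := by
      rcases Multiset.mem_cons.1 hC with he | hΓ
      · obtain ⟨rfl, rfl⟩ := Formula.imp.inj he
        exact absurd ⟨rfl, by simpa using hprem Γ Δ⟩ hng
      · exact hΓ
    simpa [weaken, Multiset.erase_cons_tail_of_mem hΓ, hΓ] using
      Inst.impL (L + Γ.erase _) (R + Δ) A' B'
  | impR Γ Δ A' B' =>
    simpa [weaken, Multiset.erase_cons_tail_of_mem hC, hC] using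
      Inst.impR (L + Γ.erase _) (R + Δ) A' B'
  | refl Γ Δ A' =>
    have hΓ : A.imp B ∈ Γ := by simpa using hC
    simpa [weaken, Multiset.erase_cons_tail_of_mem hΓ,
      Multiset.erase_cons_tail_of_mem (Multiset.mem_cons_of_mem hΓ), hΓ] using
      Inst.refl (L + Γ.erase _) (R + Δ) A'
  | box Γ Δ A' P =>
    have hΓ : A.imp B ∈ Γ := mem_of_mem_add_boxed (by simp) hC
    simpa [weaken, Multiset.erase_add_left_pos _ hΓ, hΓ, add_assoc] using
      Inst.box (L + Γ.erase _) (R + Δ) A' P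
  | cut Γ Δ E =>
    simpa [weaken, Multiset.erase_cons_tail_of_mem hC, hC] using
      Inst.cut (L + Γ.erase _) (R + Δ) E

/-- What the (left) premise of the right rule for `C` adds to the context. -/
def rightPremiseCtx : Formula → Multiset Formula × Multiset Formula
  | .imp A B => ({A}, {B})
  | .box A => (0, {A})
  | _ => (0, 0)

def rightRule : Formula → Option Rule
  | .imp _ _ => some .impR
  | .box _ => some .box
  | _ => none

lemma compatible_right (C : Formula) (hC : ∀ p, C ≠ .atom p) :
    Compatible (fun s => weaken (rightPremiseCtx C).1 (rightPremiseCtx C).2 (s.1, s.2.erase C))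
      (rightRule C) false (fun s => C ∈ s.2) := by
  intro r s p₁ p₂ h hCs hng
  set L := (rightPremiseCtx C).1
  set R := (rightPremiseCtx C).2
  cases h with
  | ax Γ Δ p =>
    have hΔ : C ∈ Δ := by simpa [hC p] using hCs
    simpa [weaken, Multiset.erase_cons_tail_of_mem hΔ] using Inst.ax (L + Γ) (R + Δ.erase C) p
  | axBot Γ Δ =>
    simpa [weaken] using Inst.axBot (L + Γ) (R + Δ.erase C)
  | impL Γ Δ A' B' =>
    simpa [weaken, Multiset.erase_cons_tail_of_mem hCs, hCs] using
      Inst.impL (L + Γ) (R + Δ.erase C) A' B'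
  | impR Γ Δ A' B' =>
    rcases Multiset.mem_cons.1 hCs with rfl | hΔ
    · exact absurd ⟨rfl, by simp [L, R, rightPremiseCtx, weaken]⟩ hng
    simpa [weaken, Multiset.erase_cons_tail_of_mem hΔ, hΔ] using
      Inst.impR (L + Γ) (R + Δ.erase C) A' B'
  | refl Γ Δ A' =>
    simpa [weaken, hCs] using Inst.refl (L + Γ) (R + Δ.erase C) A'
  | box Γ Δ A' P =>
    rcases Multiset.mem_cons.1 hCs with rfl | hΔ
    · exact absurd ⟨rfl, by simp [L, R, rightPremiseCtx, weaken]⟩ hng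
    simpa [weaken, Multiset.erase_cons_tail_of_mem hΔ, hΔ, add_assoc] using
      Inst.box (L + Γ) (R + Δ.erase C) A' P
  | cut Γ Δ E =>
    simpa [weaken, Multiset.erase_cons_tail_of_mem hCs, hCs] using
      Inst.cut (L + Γ) (R + Δ.erase C) E

lemma exists_adequate_of_compatible {ρ : Sequent → Sequent} {R₀ : Option Rule} {g : Bool}
    {Φ : Sequent → Prop} (hc : Compatible ρ R₀ g Φ)
    (hg : g = true → R₀ = some Rule.impL) :
    ∃ f : InfProof → InfProof, Adequate f ∧
      ∀ (π : InfProof) (S : Sequent), Proves π S → Φ S → Proves (f π) (ρ S) :=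
  ⟨invertProof hc, adequate_invertProof hc hg, fun _ _ h => proves_invertProof hc h⟩

/-- the five inversion rules are strongly admissible in Grz∞ + cut. -/
theorem inversion_strongly_admissible (A B : Formula) :
    (∃ f : InfProof → InfProof, Adequate f ∧
      ∀ (π : InfProof) (Γ Δ : Multiset Formula),
        Proves π (Formula.imp A B ::ₘ Γ, Δ) → Proves (f π) (B ::ₘ Γ, Δ)) ∧
    (∃ f : InfProof → InfProof, Adequate f ∧
      ∀ (π : InfProof) (Γ Δ : Multiset Formula),
        Proves π (Formula.imp A B ::ₘ Γ, Δ) → Proves (f π) (Γ, A ::ₘ Δ)) ∧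
    (∃ f : InfProof → InfProof, Adequate f ∧
      ∀ (π : InfProof) (Γ Δ : Multiset Formula),
        Proves π (Γ, Formula.imp A B ::ₘ Δ) → Proves (f π) (A ::ₘ Γ, B ::ₘ Δ)) ∧
    (∃ f : InfProof → InfProof, Adequate f ∧
      ∀ (π : InfProof) (Γ Δ : Multiset Formula),
        Proves π (Γ, Formula.bot ::ₘ Δ) → Proves (f π) (Γ, Δ)) ∧
    (∃ f : InfProof → InfProof, Adequate f ∧
      ∀ (π : InfProof) (Γ Δ : Multiset Formula),
        Proves π (Γ, Formula.box A ::ₘ Δ) → Proves (f π) (Γ, A ::ₘ Δ)) := by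
  obtain ⟨f₁, hf₁, hp₁⟩ := exists_adequate_of_compatible
    (compatible_impL A B (L := {B}) (R := 0) (g := false) (by simp [weaken])) (by simp)
  obtain ⟨f₂, hf₂, hp₂⟩ := exists_adequate_of_compatible
    (compatible_impL A B (L := 0) (R := {A}) (g := true) (by simp [weaken])) (fun _ => rfl)
  obtain ⟨f₃, hf₃, hp₃⟩ := exists_adequate_of_compatible
    (compatible_right (.imp A B) (by simp)) (by simp)
  obtain ⟨f₄, hf₄, hp₄⟩ := exists_adequate_of_compatible
    (compatible_right .bot (by simp)) (by simp)
  obtain ⟨f₅, hf₅, hp₅⟩ := exists_adequate_of_compatible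
    (compatible_right (.box A) (by simp)) (by simp)
  refine ⟨⟨f₁, hf₁, fun π Γ Δ h => ?_⟩, ⟨f₂, hf₂, fun π Γ Δ h => ?_⟩,
    ⟨f₃, hf₃, fun π Γ Δ h => ?_⟩, ⟨f₄, hf₄, fun π Γ Δ h => ?_⟩, ⟨f₅, hf₅, fun π Γ Δ h => ?_⟩⟩
  · simpa [weaken] using hp₁ π _ h (by simp)
  · simpa [weaken] using hp₂ π _ h (by simp)
  · simpa [weaken, rightPremiseCtx] using hp₃ π _ h (by simp)
  · simpa [weaken, rightPremiseCtx] using hp₄ π _ h (by simp)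
  · simpa [weaken, rightPremiseCtx] using hp₅ π _ h (by simp)
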